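/- The function Ê : S² → [0,∞) defined by the colloid minimization problem is Lipschitz continuous: there is a constant C, depending only on G and F_s, such that |Ê(n1) − Ê(n2)| ≤ C |n1 − n2| for all n1, n2 ∈ S². -/

import Mathlib

open MeasureTheory Filter Metric Real Asymptotics
open scoped ENNReal NNReal Topology

noncomputable section

/-- Three-dimensional Euclidean space. -/
abbrev E3 : Type := EuclideanSpace ℝ (Fin 3)

/-- `|∇f|²`, the squared Frobenius norm of the gradient of `f`. -/
def gradSq (f : E3 → E3) (x : E3) : ℝ :=
  ∑ i : Fin 3, ‖fderiv ℝ f x (EuclideanSpace.single i (1 : ℝ))‖ ^ 2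

/-- The Dirichlet energy `∫_s |∇f|²`, valued in `[0,∞]`. -/
def eEnergy (s : Set E3) (f : E3 → E3) : ℝ≥0∞ :=
  ∫⁻ x in s, ENNReal.ofReal (gradSq f x)

/-- `f` takes values in the unit sphere `S²` on `s`. -/
def UnitValuedOn (f : E3 → E3) (s : Set E3) : Prop := ∀ x ∈ s, ‖f x‖ = 1

/-- A smooth bounded domain in `ℝ³`: a bounded open set which is the sublevel set of a
smooth function with nonvanishing gradient on the boundary. -/
def SmoothBoundedDomain (G : Set E3) : Prop :=
  IsOpen G ∧ Bornology.IsBounded G ∧ G.Nonempty ∧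
  ∃ f : E3 → ℝ, ContDiff ℝ (⊤ : ℕ∞) f ∧ G = {x : E3 | f x < 0} ∧
    ∀ x ∈ frontier G, fderiv ℝ f x ≠ 0

/-- The total energy `E(n) = ∫_{ℝ³∖G} |∇n|² + F_s(n|_{∂G})`, where the surface energy `Fs`
depends only on the boundary trace (see `TraceInvariant`). -/
def energyC (G : Set E3) (Fs : (E3 → E3) → ℝ≥0∞) (n : E3 → E3) : ℝ≥0∞ :=
  eEnergy Gᶜ n + Fs n

/-- `Fs` is a surface energy: it depends only on the restriction of maps to `∂G`. -/
def TraceInvariant (G : Set E3) (Fs : (E3 → E3) → ℝ≥0∞) : Prop :=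
  ∀ n m : E3 → E3, (∀ x ∈ frontier G, n x = m x) → Fs n = Fs m

/-- The admissible class for the minimization problem defining `Ê(n0)`: `S²`-valued maps on
`ℝ³∖G` with `∫ |n-n0|²/(1+r²) < ∞` and `∫ |∇n|² < ∞`. -/
def AdmissibleC (G : Set E3) (n0 : E3) (n : E3 → E3) : Prop :=
  UnitValuedOn n Gᶜ ∧ (∀ x ∈ (closure G)ᶜ, DifferentiableAt ℝ n x) ∧
  (∫⁻ x in Gᶜ, (‖n x - n0‖₊ : ℝ≥0∞) ^ 2 / (1 + (‖x‖₊ : ℝ≥0∞) ^ 2)) < ⊤ ∧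
  eEnergy Gᶜ n < ⊤

/-- The minimal energy `Ê(n0)` with far-field alignment `n0`. -/
def Ehat (G : Set E3) (Fs : (E3 → E3) → ℝ≥0∞) (n0 : E3) : ℝ≥0∞ :=
  ⨅ (n : E3 → E3) (_ : AdmissibleC G n0 n), energyC G Fs n

/-- `n` is a minimizer achieving `Ê(n0)`. -/
def IsMinimizerC (G : Set E3) (Fs : (E3 → E3) → ℝ≥0∞) (n0 : E3) (n : E3 → E3) : Prop :=
  AdmissibleC G n0 n ∧ energyC G Fs n = Ehat G Fs n0

/-!
Take an admissible `n` for the far field `u` and a unit vector `v`. If `R_θ` is the rotation by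
`θ` in the plane of `u` and `v`, with `R_α u = v` and `α ≤ 2 |u - v|`, then
`m = R_{α (1 - χ)} n` is admissible for `v`, where `χ` is a smooth compactly supported cutoff
equal to `1` near `G`: it agrees with `n` near `∂G`, so `F_s` does not change, and it equals
`R_α n` far away. Since `∇m = R ∇n - α R' n ⊗ ∇χ` with `|R' n| ≤ 1`, the inequality
`(a + b)² ≤ (1 + α) a² + α (1 + α) t²` for `b ≤ α t` gives
`E(m) ≤ E(n) + α (E(n) + 15 ∫ |∇χ|²)`. Taking infima,
`Ê(v) ≤ Ê(u) + |u - v| (2 Ê(u) + b)` with `b = 30 ∫ |∇χ|²`. Applied from a point where `Ê` is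
finite this bounds `Ê` on `S²`, and then it is a Lipschitz estimate.
-/

open scoped InnerProductSpace

lemma iInf₂_le_map_iInf₂ {α β γ : Type*} [CompleteLinearOrder γ] [TopologicalSpace γ]
    [OrderTopology γ] {p : α → Prop} {q : β → Prop} {f : α → γ} {g : β → γ} {φ : γ → γ}
    (hφ : Monotone φ) (hφc : Continuous φ) (hφ_top : φ ⊤ = ⊤)
    (h : ∀ a, p a → ∃ b, q b ∧ g b ≤ φ (f a)) :
    ⨅ (b) (_ : q b), g b ≤ φ (⨅ (a) (_ : p a), f a) := by
  rw [hφ.map_iInf_of_continuousAt hφc.continuousAt hφ_top]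
  refine le_iInf fun a => ?_
  rw [Function.comp_apply, hφ.map_iInf_of_continuousAt hφc.continuousAt hφ_top]
  refine le_iInf fun ha => ?_
  obtain ⟨b, hb, hgb⟩ := h a ha
  exact (iInf₂_le b hb).trans hgb

lemma exists_lipschitz_toReal_of_le_add_mul {X : Type*} [PseudoMetricSpace X] {S : Set X}
    (hS : Bornology.IsBounded S) {f : X → ℝ≥0∞} {a b : ℝ≥0∞} (ha : a ≠ ⊤) (hb : b ≠ ⊤)
    (hf : ∀ x ∈ S, ∀ y ∈ S, f y ≤ f x + ENNReal.ofReal (dist x y) * (a * f x + b))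
    {x₀ : X} (hx₀ : x₀ ∈ S) (hfx₀ : f x₀ ≠ ⊤) :
    (∀ x ∈ S, f x ≠ ⊤) ∧
      ∃ C : ℝ, 0 ≤ C ∧ ∀ x ∈ S, ∀ y ∈ S, |(f x).toReal - (f y).toReal| ≤ C * dist x y := by
  obtain ⟨M, hM, hfM⟩ : ∃ M, M ≠ ⊤ ∧ ∀ x ∈ S, f x ≤ M :=
    ⟨f x₀ + ENNReal.ofReal (Metric.diam S) * (a * f x₀ + b), by finiteness, fun x hx =>
      (hf x₀ hx₀ x hx).trans (by gcongr; exact Metric.dist_le_diam_of_mem hS hx₀ hx)⟩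
  have hfin : ∀ x ∈ S, f x ≠ ⊤ := fun x hx => ne_top_of_le_ne_top hM (hfM x hx)
  have hle : ∀ x ∈ S, ∀ y ∈ S,
      (f y).toReal ≤ (f x).toReal + (a * M + b).toReal * dist x y := by
    intro x hx y hy
    have h : f y ≤ f x + ENNReal.ofReal (dist x y) * (a * M + b) :=
      (hf x hx y hy).trans (by gcongr; exact hfM x hx)
    have := ENNReal.toReal_le_add h (hfin x hx) (by finiteness)
    rwa [ENNReal.toReal_mul, ENNReal.toReal_ofReal dist_nonneg, mul_comm] at this
  refine ⟨hfin, (a * M + b).toReal, ENNReal.toReal_nonneg, fun x hx y hy =>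
    abs_sub_le_iff.2 ⟨?_, by linarith [hle x hx y hy]⟩⟩
  have := hle y hy x hx
  rw [dist_comm] at this
  linarith

lemma add_sq_le_one_add_mul_sq {a b α t : ℝ} (ha : 0 ≤ a) (hb : 0 ≤ b) (hα : 0 ≤ α)
    (hbt : b ≤ α * t) : (a + b) ^ 2 ≤ (1 + α) * a ^ 2 + α * (1 + α) * t ^ 2 := by
  nlinarith [mul_le_mul_of_nonneg_left hbt ha, mul_nonneg hα (sq_nonneg (a - t)),
    mul_le_mul hbt hbt hb (hb.trans hbt)]

section PlaneRotation

variable {E : Type*} [NormedAddCommGroup E] [InnerProductSpace ℝ E]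

def planeProj (e₁ e₂ : E) : E →L[ℝ] E :=
  (innerSL ℝ e₁).smulRight e₁ + (innerSL ℝ e₂).smulRight e₂

def planeQuarterTurn (e₁ e₂ : E) : E →L[ℝ] E :=
  (innerSL ℝ e₁).smulRight e₂ - (innerSL ℝ e₂).smulRight e₁

/-- Rotation by the angle `θ` in the plane spanned by an orthonormal pair `e₁, e₂`, fixing its
orthogonal complement (Rodrigues' formula). -/
def planeRotation (e₁ e₂ : E) (θ : ℝ) : E →L[ℝ] E :=
  ContinuousLinearMap.id ℝ E + (Real.cos θ - 1) • planeProj e₁ e₂ +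
    Real.sin θ • planeQuarterTurn e₁ e₂

lemma planeProj_apply (e₁ e₂ y : E) : planeProj e₁ e₂ y = ⟪e₁, y⟫_ℝ • e₁ + ⟪e₂, y⟫_ℝ • e₂ := by
  simp [planeProj]

lemma planeQuarterTurn_apply (e₁ e₂ y : E) :
    planeQuarterTurn e₁ e₂ y = ⟪e₁, y⟫_ℝ • e₂ - ⟪e₂, y⟫_ℝ • e₁ := by
  simp [planeQuarterTurn]

lemma planeRotation_apply (e₁ e₂ : E) (θ : ℝ) (y : E) :
    planeRotation e₁ e₂ θ y =
      y + (Real.cos θ - 1) • planeProj e₁ e₂ y + Real.sin θ • planeQuarterTurn e₁ e₂ y := by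
  simp [planeRotation]

lemma hasDerivAt_planeRotation (e₁ e₂ : E) (θ : ℝ) :
    HasDerivAt (planeRotation e₁ e₂)
      (Real.cos θ • planeQuarterTurn e₁ e₂ - Real.sin θ • planeProj e₁ e₂) θ := by
  have h := ((hasDerivAt_const θ (ContinuousLinearMap.id ℝ E)).add
    (((Real.hasDerivAt_cos θ).sub_const 1).smul_const (planeProj e₁ e₂))).add
    ((Real.hasDerivAt_sin θ).smul_const (planeQuarterTurn e₁ e₂))
  exact h.congr_deriv (by rw [zero_add, neg_smul]; abel)

lemma planeRotation_zero (e₁ e₂ : E) :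
    planeRotation e₁ e₂ 0 = ContinuousLinearMap.id ℝ E := by
  simp [planeRotation]

lemma planeRotation_apply_left {e₁ e₂ : E} (h₁ : ‖e₁‖ = 1) (h₁₂ : ⟪e₁, e₂⟫_ℝ = 0) (θ : ℝ) :
    planeRotation e₁ e₂ θ e₁ = Real.cos θ • e₁ + Real.sin θ • e₂ := by
  rw [planeRotation_apply, planeProj_apply, planeQuarterTurn_apply,
    inner_self_eq_one_of_norm_eq_one h₁, real_inner_comm, h₁₂]
  module

variable {e₁ e₂ : E} (h₁ : ‖e₁‖ = 1) (h₂ : ‖e₂‖ = 1) (h₁₂ : ⟪e₁, e₂⟫_ℝ = 0)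
include h₁ h₂ h₁₂

lemma norm_smul_add_smul_sq (a b : ℝ) : ‖a • e₁ + b • e₂‖ ^ 2 = a ^ 2 + b ^ 2 := by
  have h11 : ⟪e₁, e₁⟫_ℝ = 1 := inner_self_eq_one_of_norm_eq_one h₁
  have h22 : ⟪e₂, e₂⟫_ℝ = 1 := inner_self_eq_one_of_norm_eq_one h₂
  rw [← real_inner_self_eq_norm_sq]
  simp only [inner_add_left, inner_add_right, real_inner_smul_left, real_inner_smul_right,
    h11, h22, h₁₂, real_inner_comm e₁ e₂]
  ring

lemma inner_sq_add_inner_sq_le (y : E) : ⟪e₁, y⟫_ℝ ^ 2 + ⟪e₂, y⟫_ℝ ^ 2 ≤ ‖y‖ ^ 2 := by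
  have hv : Orthonormal ℝ ![e₁, e₂] := by
    rw [orthonormal_iff_ite]
    intro i j
    fin_cases i <;> fin_cases j <;> simp [h₁, h₂, h₁₂, real_inner_comm e₁ e₂]
  simpa [Fin.sum_univ_two] using hv.sum_inner_products_le y (s := Finset.univ)

lemma norm_planeRotation_apply (θ : ℝ) (y : E) : ‖planeRotation e₁ e₂ θ y‖ = ‖y‖ := by
  have h11 : ⟪e₁, e₁⟫_ℝ = 1 := inner_self_eq_one_of_norm_eq_one h₁
  have h22 : ⟪e₂, e₂⟫_ℝ = 1 := inner_self_eq_one_of_norm_eq_one h₂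
  refine (sq_eq_sq₀ (norm_nonneg _) (norm_nonneg _)).mp ?_
  rw [← real_inner_self_eq_norm_sq, ← real_inner_self_eq_norm_sq, planeRotation_apply,
    planeProj_apply, planeQuarterTurn_apply]
  simp only [inner_sub_left, inner_sub_right, inner_add_left, inner_add_right,
    real_inner_smul_left, real_inner_smul_right, h11, h22, h₁₂, real_inner_comm e₁ e₂,
    real_inner_comm e₁ y, real_inner_comm e₂ y]
  linear_combination (⟪e₁, y⟫_ℝ ^ 2 + ⟪e₂, y⟫_ℝ ^ 2) * Real.sin_sq_add_cos_sq θ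

lemma norm_deriv_planeRotation_apply_le (θ : ℝ) (y : E) :
    ‖(Real.cos θ • planeQuarterTurn e₁ e₂ - Real.sin θ • planeProj e₁ e₂) y‖ ≤ ‖y‖ := by
  have hy : (Real.cos θ • planeQuarterTurn e₁ e₂ - Real.sin θ • planeProj e₁ e₂) y =
      (-(Real.sin θ * ⟪e₁, y⟫_ℝ) - Real.cos θ * ⟪e₂, y⟫_ℝ) • e₁ +
        (Real.cos θ * ⟪e₁, y⟫_ℝ - Real.sin θ * ⟪e₂, y⟫_ℝ) • e₂ := by
    simp only [FunLike.coe_sub, FunLike.coe_smul, Pi.sub_apply, Pi.smul_apply, planeProj_apply,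
      planeQuarterTurn_apply]
    module
  refine pow_le_pow_iff_left₀ (norm_nonneg _) (norm_nonneg _) two_ne_zero |>.mp ?_
  rw [hy, norm_smul_add_smul_sq h₁ h₂ h₁₂]
  linear_combination inner_sq_add_inner_sq_le h₁ h₂ h₁₂ y +
    (⟪e₁, y⟫_ℝ ^ 2 + ⟪e₂, y⟫_ℝ ^ 2) * Real.sin_sq_add_cos_sq θ

end PlaneRotation

section Angle

variable {E : Type*} [NormedAddCommGroup E] [InnerProductSpace ℝ E]

lemma exists_norm_eq_one_inner_eq_zero [FiniteDimensional ℝ E] (hE : 2 ≤ Module.finrank ℝ E)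
    (u : E) : ∃ e : E, ‖e‖ = 1 ∧ ⟪u, e⟫_ℝ = 0 := by
  have hspan : Module.finrank ℝ (ℝ ∙ u) ≤ 1 := by
    simpa using finrank_span_le_card ({u} : Set E)
  have hperp : (ℝ ∙ u)ᗮ ≠ ⊥ := by
    intro h
    have := (ℝ ∙ u).finrank_add_finrank_orthogonal
    rw [h, finrank_bot] at this
    omega
  obtain ⟨w, hw, hw0⟩ := Submodule.exists_mem_ne_zero_of_ne_bot hperp
  refine ⟨‖w‖⁻¹ • w, norm_smul_inv_norm hw0, ?_⟩
  rw [real_inner_smul_right, Submodule.mem_orthogonal_singleton_iff_inner_right.mp hw, mul_zero]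

lemma arccos_inner_le_two_mul_norm_sub {u v : E} (hu : ‖u‖ = 1) (hv : ‖v‖ = 1) :
    Real.arccos ⟪u, v⟫_ℝ ≤ 2 * ‖u - v‖ := by
  set θ := Real.arccos ⟪u, v⟫_ℝ
  have hθ : 0 ≤ θ := Real.arccos_nonneg _
  have hcos : Real.cos θ = ⟪u, v⟫_ℝ := Real.cos_arccos
    (neg_one_le_real_inner_of_norm_eq_one hu hv) (real_inner_le_one_of_norm_eq_one hu hv)
  have hnorm : ‖u - v‖ ^ 2 = 2 - 2 * Real.cos θ := by
    rw [@norm_sub_sq_real, hu, hv, hcos]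
    ring
  have hquad : Real.cos θ ≤ 1 - 2 / π ^ 2 * θ ^ 2 :=
    Real.cos_le_one_sub_mul_cos_sq (by rw [abs_of_nonneg hθ]; exact Real.arccos_le_pi _)
  have hπ : 1 / 4 ≤ 4 / π ^ 2 := by
    rw [div_le_div_iff₀ (by norm_num) (by positivity)]
    nlinarith [Real.pi_le_four, Real.pi_pos]
  have : θ ^ 2 ≤ (2 * ‖u - v‖) ^ 2 :=
    calc θ ^ 2 = 4 * (1 / 4 * θ ^ 2) := by ring
      _ ≤ 4 * (4 / π ^ 2 * θ ^ 2) := by gcongr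
      _ ≤ (2 * ‖u - v‖) ^ 2 := by linear_combination 8 * hquad - 4 * hnorm
  exact pow_le_pow_iff_left₀ hθ (by positivity) two_ne_zero |>.mp this

lemma exists_planeRotation_apply_eq [FiniteDimensional ℝ E] (hE : 2 ≤ Module.finrank ℝ E)
    {u v : E} (hu : ‖u‖ = 1) (hv : ‖v‖ = 1) :
    ∃ θ : ℝ, ∃ e : E, 0 ≤ θ ∧ θ ≤ 2 * ‖u - v‖ ∧ ‖e‖ = 1 ∧ ⟪u, e⟫_ℝ = 0 ∧
      planeRotation u e θ u = v := by
  set w := v - ⟪u, v⟫_ℝ • u with hw_def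
  have huw : ⟪u, w⟫_ℝ = 0 := by
    rw [hw_def, inner_sub_right, real_inner_smul_right, real_inner_self_eq_norm_sq, hu]
    ring
  have hw : ‖w‖ = Real.sin (Real.arccos ⟪u, v⟫_ℝ) := by
    have hw2 : ‖w‖ ^ 2 = 1 - ⟪u, v⟫_ℝ ^ 2 := by
      rw [hw_def, @norm_sub_sq_real, hv, real_inner_smul_right, real_inner_comm, norm_smul, hu,
        Real.norm_eq_abs, mul_one, sq_abs]
      ring
    rw [Real.sin_arccos, ← hw2, Real.sqrt_sq (norm_nonneg w)]
  obtain ⟨e, he, hue, hew⟩ : ∃ e : E, ‖e‖ = 1 ∧ ⟪u, e⟫_ℝ = 0 ∧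
      Real.sin (Real.arccos ⟪u, v⟫_ℝ) • e = w := by
    by_cases hw0 : w = 0
    · obtain ⟨e, he, hue⟩ := exists_norm_eq_one_inner_eq_zero hE u
      exact ⟨e, he, hue, by rw [← hw, hw0, norm_zero, zero_smul]⟩
    · refine ⟨‖w‖⁻¹ • w, norm_smul_inv_norm hw0, ?_, ?_⟩
      · rw [real_inner_smul_right, huw, mul_zero]
      · rw [← hw, smul_smul, mul_inv_cancel₀ (norm_ne_zero_iff.mpr hw0), one_smul]
  refine ⟨Real.arccos ⟪u, v⟫_ℝ, e, Real.arccos_nonneg _, arccos_inner_le_two_mul_norm_sub hu hv,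
    he, hue, ?_⟩
  rw [planeRotation_apply_left hu hue, hew, Real.cos_arccos
    (neg_one_le_real_inner_of_norm_eq_one hu hv) (real_inner_le_one_of_norm_eq_one hu hv),
    hw_def, add_sub_cancel]

end Angle

section Composition

variable {F E : Type*} [NormedAddCommGroup F] [NormedSpace ℝ F]
  [NormedAddCommGroup E] [InnerProductSpace ℝ E] {e₁ e₂ : E} {θ : F → ℝ} {n : F → E}
  {θ' : F →L[ℝ] ℝ} {n' : F →L[ℝ] E} {x : F}

lemma HasFDerivAt.planeRotation_apply (hθ : HasFDerivAt θ θ' x) (hn : HasFDerivAt n n' x) :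
    HasFDerivAt (fun y => planeRotation e₁ e₂ (θ y) (n y))
      ((planeRotation e₁ e₂ (θ x)).comp n' + θ'.smulRight
        ((Real.cos (θ x) • planeQuarterTurn e₁ e₂ - Real.sin (θ x) • planeProj e₁ e₂) (n x)))
      x := by
  have hR := (hasDerivAt_planeRotation e₁ e₂ (θ x)).hasFDerivAt.comp x hθ
  refine (hR.clm_apply hn).congr_fderiv ?_
  ext h
  simp

lemma norm_fderiv_planeRotation_apply_le (h₁ : ‖e₁‖ = 1) (h₂ : ‖e₂‖ = 1) (h₁₂ : ⟪e₁, e₂⟫_ℝ = 0)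
    (hθ : HasFDerivAt θ θ' x) (hn : HasFDerivAt n n' x) (h : F) :
    ‖fderiv ℝ (fun y => planeRotation e₁ e₂ (θ y) (n y)) x h‖ ≤ ‖n' h‖ + |θ' h| * ‖n x‖ := by
  rw [(hθ.planeRotation_apply hn).fderiv]
  refine (norm_add_le _ _).trans (add_le_add ?_ ?_)
  · simp [norm_planeRotation_apply h₁ h₂ h₁₂]
  · simpa [norm_smul] using mul_le_mul_of_nonneg_left
      (norm_deriv_planeRotation_apply_le h₁ h₂ h₁₂ (θ x) (n x)) (abs_nonneg (θ' h))

end Composition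

lemma gradSq_nonneg (f : E3 → E3) (x : E3) : 0 ≤ gradSq f x :=
  Finset.sum_nonneg fun _ _ => sq_nonneg _

lemma gradSq_planeRotation_apply_le {e₁ e₂ : E3} (h₁ : ‖e₁‖ = 1) (h₂ : ‖e₂‖ = 1)
    (h₁₂ : ⟪e₁, e₂⟫_ℝ = 0) {θ : E3 → ℝ} {θ' : E3 →L[ℝ] ℝ} {n : E3 → E3} {x : E3} {α t : ℝ}
    (hθ : HasFDerivAt θ θ' x) (hn : DifferentiableAt ℝ n x) (hnx : ‖n x‖ = 1) (hα : 0 ≤ α)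
    (hθ' : ‖θ'‖ ≤ α * t) :
    gradSq (fun y => planeRotation e₁ e₂ (θ y) (n y)) x ≤
      (1 + α) * gradSq n x + 3 * (α * (1 + α) * t ^ 2) := by
  have h3 : (3 : ℝ) = ∑ _i : Fin 3, 1 := by simp
  rw [gradSq, gradSq, Finset.mul_sum, h3, Finset.sum_mul, ← Finset.sum_add_distrib]
  refine Finset.sum_le_sum fun i _ => ?_
  set ei : E3 := EuclideanSpace.single i 1
  have hθi : |θ' ei| ≤ α * t := by
    simpa [ei] using (θ'.le_opNorm ei).trans (by simpa [ei] using hθ')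
  have hle := norm_fderiv_planeRotation_apply_le h₁ h₂ h₁₂ hθ hn.hasFDerivAt ei
  rw [hnx, mul_one] at hle
  calc ‖fderiv ℝ (fun y => planeRotation e₁ e₂ (θ y) (n y)) x ei‖ ^ 2
      ≤ (‖fderiv ℝ n x ei‖ + |θ' ei|) ^ 2 := pow_le_pow_left₀ (norm_nonneg _) hle 2
    _ ≤ (1 + α) * ‖fderiv ℝ n x ei‖ ^ 2 + α * (1 + α) * t ^ 2 :=
      add_sq_le_one_add_mul_sq (norm_nonneg _) (abs_nonneg _) hα hθi
    _ = _ := by ring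

lemma exists_cutoff_of_isBounded {E : Type*} [NormedAddCommGroup E] [NormedSpace ℝ E]
    [FiniteDimensional ℝ E] {s : Set E} (hs : Bornology.IsBounded s) :
    ∃ χ : E → ℝ, ContDiff ℝ 1 χ ∧ HasCompactSupport χ ∧ ∀ x ∈ closure s, χ =ᶠ[𝓝 x] 1 := by
  obtain ⟨R, hR, hsR⟩ := hs.closure.subset_ball_lt 0 0
  let χ : ContDiffBump (0 : E) := ⟨R, 2 * R, hR, by linarith⟩
  refine ⟨χ, χ.contDiff, χ.hasCompactSupport, fun x hx => ?_⟩
  filter_upwards [isOpen_ball.mem_nhds (hsR hx)] with y hy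
  exact χ.one_of_mem_closedBall (ball_subset_closedBall hy)

def cutoffRotation (u e : E3) (α : ℝ) (χ : E3 → ℝ) (n : E3 → E3) (x : E3) : E3 :=
  planeRotation u e (α * (1 - χ x)) (n x)

section CutoffRotation

variable {G : Set E3} {χ : E3 → ℝ} {n : E3 → E3} {u e v : E3} {α : ℝ}

lemma cutoffRotation_eventuallyEq {x : E3} (hχ : χ =ᶠ[𝓝 x] 1) :
    cutoffRotation u e α χ n =ᶠ[𝓝 x] n := by
  filter_upwards [hχ] with y hy
  simp [cutoffRotation, hy, planeRotation_zero]

lemma norm_cutoffRotation (hu : ‖u‖ = 1) (he : ‖e‖ = 1) (hue : ⟪u, e⟫_ℝ = 0) (x : E3) :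
    ‖cutoffRotation u e α χ n x‖ = ‖n x‖ :=
  norm_planeRotation_apply hu he hue _ _

lemma differentiableAt_cutoffRotation {x : E3} (hχ : DifferentiableAt ℝ χ x)
    (hn : DifferentiableAt ℝ n x) : DifferentiableAt ℝ (cutoffRotation u e α χ n) x :=
  ((((hasFDerivAt_const 1 x).sub hχ.hasFDerivAt).const_mul α).planeRotation_apply
    hn.hasFDerivAt).differentiableAt

lemma gradSq_cutoffRotation_le (hu : ‖u‖ = 1) (he : ‖e‖ = 1) (hue : ⟪u, e⟫_ℝ = 0)
    (hα₀ : 0 ≤ α) (hα₄ : α ≤ 4) (hχ : ContDiff ℝ 1 χ) (hχG : ∀ x ∈ closure G, χ =ᶠ[𝓝 x] 1)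
    (hn₁ : UnitValuedOn n Gᶜ) (hnd : ∀ x ∈ (closure G)ᶜ, DifferentiableAt ℝ n x)
    {x : E3} (hx : x ∈ Gᶜ) :
    gradSq (cutoffRotation u e α χ n) x ≤
      (1 + α) * gradSq n x + α * (15 * ‖fderiv ℝ χ x‖ ^ 2) := by
  by_cases hxG : x ∈ closure G
  · have hm : gradSq (cutoffRotation u e α χ n) x = gradSq n x := by
      simp only [gradSq, (cutoffRotation_eventuallyEq (hχG x hxG)).fderiv_eq]
    rw [hm]
    nlinarith [gradSq_nonneg n x, sq_nonneg ‖fderiv ℝ χ x‖]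
  · have hθ : HasFDerivAt (fun y => α * (1 - χ y)) (α • (0 - fderiv ℝ χ x)) x :=
      ((hasFDerivAt_const 1 x).sub (hχ.differentiable one_ne_zero x).hasFDerivAt).const_mul α
    have hθ' : ‖α • (0 - fderiv ℝ χ x)‖ ≤ α * ‖fderiv ℝ χ x‖ := by
      rw [zero_sub, smul_neg, norm_neg, norm_smul, Real.norm_of_nonneg hα₀]
    have h := gradSq_planeRotation_apply_le hu he hue hθ (hnd x hxG) (hn₁ x hx) hα₀ hθ'
    have h15 : 3 * (α * (1 + α) * ‖fderiv ℝ χ x‖ ^ 2) ≤ α * (15 * ‖fderiv ℝ χ x‖ ^ 2) := by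
      nlinarith [mul_nonneg hα₀ (sq_nonneg ‖fderiv ℝ χ x‖)]
    exact h.trans (by linarith)

lemma eEnergy_cutoffRotation_le (hG : IsOpen G) (hu : ‖u‖ = 1) (he : ‖e‖ = 1)
    (hue : ⟪u, e⟫_ℝ = 0) (hα₀ : 0 ≤ α) (hα₄ : α ≤ 4) (hχ : ContDiff ℝ 1 χ)
    (hχG : ∀ x ∈ closure G, χ =ᶠ[𝓝 x] 1) (hn₁ : UnitValuedOn n Gᶜ)
    (hnd : ∀ x ∈ (closure G)ᶜ, DifferentiableAt ℝ n x) :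
    eEnergy Gᶜ (cutoffRotation u e α χ n) ≤ (1 + ENNReal.ofReal α) * eEnergy Gᶜ n +
      ENNReal.ofReal α * ∫⁻ x, ENNReal.ofReal (15 * ‖fderiv ℝ χ x‖ ^ 2) := by
  have hmeas : Measurable fun x => ENNReal.ofReal (15 * ‖fderiv ℝ χ x‖ ^ 2) :=
    (continuous_const.mul ((hχ.continuous_fderiv one_ne_zero).norm.pow 2)).measurable.ennreal_ofReal
  calc eEnergy Gᶜ (cutoffRotation u e α χ n)
      ≤ ∫⁻ x in Gᶜ, ((1 + ENNReal.ofReal α) * ENNReal.ofReal (gradSq n x) +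
          ENNReal.ofReal α * ENNReal.ofReal (15 * ‖fderiv ℝ χ x‖ ^ 2)) := by
        refine setLIntegral_mono' hG.measurableSet.compl fun x hx => ?_
        have h := gradSq_cutoffRotation_le hu he hue hα₀ hα₄ hχ hχG hn₁ hnd hx
        refine (ENNReal.ofReal_le_ofReal h).trans_eq ?_
        rw [ENNReal.ofReal_add (by positivity [gradSq_nonneg n x]) (by positivity),
          ENNReal.ofReal_mul (by positivity), ENNReal.ofReal_mul hα₀,
          ENNReal.ofReal_add zero_le_one hα₀, ENNReal.ofReal_one]
    _ = (1 + ENNReal.ofReal α) * eEnergy Gᶜ n +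
          ENNReal.ofReal α * ∫⁻ x in Gᶜ, ENNReal.ofReal (15 * ‖fderiv ℝ χ x‖ ^ 2) := by
        rw [lintegral_add_right _ (hmeas.const_mul _), lintegral_const_mul' _ _ (by finiteness),
          lintegral_const_mul _ hmeas, eEnergy]
    _ ≤ _ := by
        gcongr _ + _ * ?_
        exact setLIntegral_le_lintegral _ _

lemma lintegral_cutoffRotation_sub_le (hG : IsOpen G) (hu : ‖u‖ = 1) (he : ‖e‖ = 1)
    (hue : ⟪u, e⟫_ℝ = 0) (hv : ‖v‖ = 1) (hrot : planeRotation u e α u = v)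
    (hn₁ : UnitValuedOn n Gᶜ) :
    ∫⁻ x in Gᶜ, (‖cutoffRotation u e α χ n x - v‖₊ : ℝ≥0∞) ^ 2 / (1 + (‖x‖₊ : ℝ≥0∞) ^ 2) ≤
      (∫⁻ x in Gᶜ, (‖n x - u‖₊ : ℝ≥0∞) ^ 2 / (1 + (‖x‖₊ : ℝ≥0∞) ^ 2)) +
        4 * volume (tsupport χ) := by
  have hK : MeasurableSet (tsupport χ) := (isClosed_tsupport χ).measurableSet
  calc _ ≤ ∫⁻ x in Gᶜ, ((‖n x - u‖₊ : ℝ≥0∞) ^ 2 / (1 + (‖x‖₊ : ℝ≥0∞) ^ 2) +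
          (tsupport χ).indicator (fun _ => 4) x) := by
        refine setLIntegral_mono' hG.measurableSet.compl fun x hx => ?_
        by_cases hxK : x ∈ tsupport χ
        · have hle : ‖cutoffRotation u e α χ n x - v‖ ≤ 2 := by
            have := norm_sub_le (cutoffRotation u e α χ n x) v
            rw [norm_cutoffRotation hu he hue, hn₁ x hx, hv] at this
            linarith
          have hle' : (‖cutoffRotation u e α χ n x - v‖₊ : ℝ≥0∞) ^ 2 ≤ 4 := by
            have : (‖cutoffRotation u e α χ n x - v‖₊ : ℝ≥0∞) ≤ 2 := by
              exact_mod_cast hle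
            calc _ ≤ (2 : ℝ≥0∞) ^ 2 := by gcongr
              _ = 4 := by norm_num
          rw [Set.indicator_of_mem hxK]
          refine le_add_left (ENNReal.div_le_of_le_mul (hle'.trans ?_))
          exact le_mul_of_one_le_right' le_self_add
        · have hmv : cutoffRotation u e α χ n x - v = planeRotation u e α (n x - u) := by
            rw [map_sub, hrot, cutoffRotation, image_eq_zero_of_notMem_tsupport hxK, sub_zero,
              mul_one]
          rw [hmv, ← enorm_eq_nnnorm, ← enorm_eq_nnnorm, ← ofReal_norm,
            norm_planeRotation_apply hu he hue, ofReal_norm]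
          exact le_self_add
    _ = (∫⁻ x in Gᶜ, (‖n x - u‖₊ : ℝ≥0∞) ^ 2 / (1 + (‖x‖₊ : ℝ≥0∞) ^ 2)) +
          ∫⁻ x in Gᶜ, (tsupport χ).indicator (fun _ => 4) x :=
        lintegral_add_right _ (measurable_const.indicator hK)
    _ ≤ _ := by
        gcongr
        exact (setLIntegral_le_lintegral _ _).trans (lintegral_indicator_const hK _).le

variable (χ) in
lemma lintegral_ofReal_mul_norm_fderiv_sq_lt_top (c : ℝ) (hχ : ContDiff ℝ 1 χ)
    (hχc : HasCompactSupport χ) : ∫⁻ x, ENNReal.ofReal (c * ‖fderiv ℝ χ x‖ ^ 2) < ⊤ := by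
  refine Integrable.lintegral_lt_top (Continuous.integrable_of_hasCompactSupport ?_ ?_)
  · exact continuous_const.mul ((hχ.continuous_fderiv one_ne_zero).norm.pow 2)
  · exact (hχc.fderiv (𝕜 := ℝ)).norm.comp_left (g := fun t => c * t ^ 2) (by simp)

lemma AdmissibleC.cutoffRotation (hG : IsOpen G) (hu : ‖u‖ = 1) (he : ‖e‖ = 1)
    (hue : ⟪u, e⟫_ℝ = 0) (hv : ‖v‖ = 1) (hα₀ : 0 ≤ α) (hα₄ : α ≤ 4)
    (hrot : planeRotation u e α u = v) (hχ : ContDiff ℝ 1 χ) (hχc : HasCompactSupport χ)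
    (hχG : ∀ x ∈ closure G, χ =ᶠ[𝓝 x] 1) (hn : AdmissibleC G u n) :
    AdmissibleC G v (cutoffRotation u e α χ n) := by
  obtain ⟨hn₁, hnd, hnL, hnE⟩ := hn
  refine ⟨fun x hx => ?_, fun x hx => ?_, ?_, ?_⟩
  · rw [norm_cutoffRotation hu he hue, hn₁ x hx]
  · exact differentiableAt_cutoffRotation (hχ.differentiable one_ne_zero x) (hnd x hx)
  · refine (lintegral_cutoffRotation_sub_le hG hu he hue hv hrot hn₁).trans_lt ?_
    exact ENNReal.add_lt_top.2 ⟨hnL, ENNReal.mul_lt_top (by simp) hχc.isCompact.measure_lt_top⟩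
  · refine (eEnergy_cutoffRotation_le hG hu he hue hα₀ hα₄ hχ hχG hn₁ hnd).trans_lt ?_
    have := lintegral_ofReal_mul_norm_fderiv_sq_lt_top χ 15 hχ hχc
    finiteness

lemma energyC_cutoffRotation_le {Fs : (E3 → E3) → ℝ≥0∞} (hFs : TraceInvariant G Fs)
    (hG : IsOpen G) (hu : ‖u‖ = 1) (he : ‖e‖ = 1) (hue : ⟪u, e⟫_ℝ = 0) (hα₀ : 0 ≤ α)
    (hα₄ : α ≤ 4) (hχ : ContDiff ℝ 1 χ) (hχG : ∀ x ∈ closure G, χ =ᶠ[𝓝 x] 1)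
    (hn₁ : UnitValuedOn n Gᶜ) (hnd : ∀ x ∈ (closure G)ᶜ, DifferentiableAt ℝ n x) :
    energyC G Fs (cutoffRotation u e α χ n) ≤ energyC G Fs n + ENNReal.ofReal α *
      (energyC G Fs n + ∫⁻ x, ENNReal.ofReal (15 * ‖fderiv ℝ χ x‖ ^ 2)) := by
  have hFsm : Fs (cutoffRotation u e α χ n) = Fs n := hFs _ _ fun x hx =>
    (cutoffRotation_eventuallyEq (hχG x (frontier_subset_closure hx))).eq_of_nhds
  rw [energyC, energyC, hFsm]
  calc _ ≤ (1 + ENNReal.ofReal α) * eEnergy Gᶜ n +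
          ENNReal.ofReal α * (∫⁻ x, ENNReal.ofReal (15 * ‖fderiv ℝ χ x‖ ^ 2)) + Fs n := by
        gcongr
        exact eEnergy_cutoffRotation_le hG hu he hue hα₀ hα₄ hχ hχG hn₁ hnd
    _ = eEnergy Gᶜ n + Fs n + ENNReal.ofReal α *
          (eEnergy Gᶜ n + ∫⁻ x, ENNReal.ofReal (15 * ‖fderiv ℝ χ x‖ ^ 2)) := by ring
    _ ≤ _ := by
        gcongr
        exact le_self_add

end CutoffRotation

lemma exists_admissibleC_energyC_le {G : Set E3} (hG : SmoothBoundedDomain G)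
    {Fs : (E3 → E3) → ℝ≥0∞} (hFs : TraceInvariant G Fs) :
    ∃ b : ℝ≥0∞, b ≠ ⊤ ∧ ∀ u v : E3, ‖u‖ = 1 → ‖v‖ = 1 → ∀ n, AdmissibleC G u n →
      ∃ m, AdmissibleC G v m ∧
        energyC G Fs m ≤ energyC G Fs n + ENNReal.ofReal ‖u - v‖ * (2 * energyC G Fs n + b) := by
  obtain ⟨hGo, hGb, -⟩ := hG
  obtain ⟨χ, hχ, hχc, hχG⟩ := exists_cutoff_of_isBounded hGb
  set J := ∫⁻ x, ENNReal.ofReal (15 * ‖fderiv ℝ χ x‖ ^ 2)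
  have hJ : J ≠ ⊤ := (lintegral_ofReal_mul_norm_fderiv_sq_lt_top χ 15 hχ hχc).ne
  refine ⟨2 * J, by finiteness, fun u v hu hv n hn => ?_⟩
  obtain ⟨α, e, hα₀, hα, he, hue, hrot⟩ :=
    exists_planeRotation_apply_eq (by simp) hu hv
  have hα₄ : α ≤ 4 := by linarith [norm_sub_le u v, hu, hv]
  refine ⟨cutoffRotation u e α χ n,
    hn.cutoffRotation hGo hu he hue hv hα₀ hα₄ hrot hχ hχc hχG, ?_⟩
  refine (energyC_cutoffRotation_le hFs hGo hu he hue hα₀ hα₄ hχ hχG hn.1 hn.2.1).trans ?_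
  have hα' : ENNReal.ofReal α ≤ ENNReal.ofReal ‖u - v‖ * 2 :=
    calc ENNReal.ofReal α ≤ ENNReal.ofReal (‖u - v‖ * 2) := ENNReal.ofReal_le_ofReal (by linarith)
      _ = ENNReal.ofReal ‖u - v‖ * 2 := by simp [ENNReal.ofReal_mul (norm_nonneg _)]
  calc _ ≤ energyC G Fs n + ENNReal.ofReal ‖u - v‖ * 2 * (energyC G Fs n + J) := by gcongr
    _ = _ := by ring

lemma exists_Ehat_le {G : Set E3} (hG : SmoothBoundedDomain G) {Fs : (E3 → E3) → ℝ≥0∞}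
    (hFs : TraceInvariant G Fs) :
    ∃ b : ℝ≥0∞, b ≠ ⊤ ∧ ∀ u v : E3, ‖u‖ = 1 → ‖v‖ = 1 →
      Ehat G Fs v ≤ Ehat G Fs u + ENNReal.ofReal ‖u - v‖ * (2 * Ehat G Fs u + b) := by
  obtain ⟨b, hb, htransfer⟩ := exists_admissibleC_energyC_le hG hFs
  refine ⟨b, hb, fun u v hu hv => ?_⟩
  refine iInf₂_le_map_iInf₂ (φ := fun t => t + ENNReal.ofReal ‖u - v‖ * (2 * t + b)) ?_ ?_ ?_
    (htransfer u v hu hv)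
  · exact fun s t hst => by dsimp only; gcongr
  · exact continuous_id.add ((ENNReal.continuous_const_mul ENNReal.ofReal_ne_top).comp
      ((ENNReal.continuous_const_mul (by simp)).add continuous_const))
  · exact top_add _

/-- **`Ê` is Lipschitz.** The minimal energy `Ê : S² → [0,∞)` is finite and Lipschitz
continuous: `|Ê(n1) − Ê(n2)| ≤ C |n1 − n2|` with `C = C(G, F_s)`. -/
theorem Ehat_lipschitz (G : Set E3) (hG : SmoothBoundedDomain G)
    (Fs : (E3 → E3) → ℝ≥0∞) (hFs : TraceInvariant G Fs)
    (hfin : ∃ n0 : E3, ‖n0‖ = 1 ∧ ∃ n : E3 → E3, AdmissibleC G n0 n ∧ energyC G Fs n ≠ ⊤) :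
    (∀ n0 : E3, ‖n0‖ = 1 → Ehat G Fs n0 ≠ ⊤) ∧
    ∃ C : ℝ, 0 ≤ C ∧ ∀ n1 n2 : E3, ‖n1‖ = 1 → ‖n2‖ = 1 →
      |(Ehat G Fs n1).toReal - (Ehat G Fs n2).toReal| ≤ C * ‖n1 - n2‖ := by
  obtain ⟨b, hb, hEhat⟩ := exists_Ehat_le hG hFs
  obtain ⟨x₀, hx₀, n, hn, hEn⟩ := hfin
  have hEhat' : ∀ x ∈ sphere (0 : E3) 1, ∀ y ∈ sphere (0 : E3) 1,
      Ehat G Fs y ≤ Ehat G Fs x + ENNReal.ofReal (dist x y) * (2 * Ehat G Fs x + b) :=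
    fun x hx y hy => by
      rw [dist_eq_norm]
      exact hEhat x y (by simpa using hx) (by simpa using hy)
  obtain ⟨hfinite, C, hC, hLip⟩ := exists_lipschitz_toReal_of_le_add_mul isBounded_sphere
    (by simp) hb hEhat' (x₀ := x₀) (by simpa using hx₀) ((iInf₂_le n hn).trans_lt hEn.lt_top).ne
  refine ⟨fun n0 h => hfinite n0 (by simpa using h), C, hC, fun n1 n2 h1 h2 => ?_⟩
  simpa [dist_eq_norm] using hLip n1 (by simpa using h1) n2 (by simpa using h2)
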